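/- There exists a sequence of C² functions φ_k : ℝ → ℝ such that: φ_k(z) = φ_k'(z) = 0 for z ≤ 0; φ_k(z) → max(z,0) pointwise as k → ∞; 0 ≤ φ_k'(z) ≤ 1 for all z; and φ_k''(z) ≤ 2/(kz) for all z > 0. -/

import Mathlib

/-!
Let `S` be the smooth transition from `0` (on `t ≤ 0`) to `1` (on `t ≥ 1`) and `M > 0` a bound
for `S'`, which exists because `S'` is continuous and vanishes off `[0, 1]`. Take `φ_k` to be the
primitive, vanishing at `0`, of `g_k(u) = S((2 / (M k)) (log u + (M / 2 + 1) k))` for `u > 0` and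
`g_k = 0` for `u ≤ 0`. Then `φ_k' = g_k ∈ [0, 1]`, and measuring `u` on a logarithmic scale gives
`g_k'(u) = S'(…) · 2 / (M k u) ≤ 2 / (k u)`. Since `g_k = 1` on `[e^{-k}, ∞)`, we get
`z - e^{-k} ≤ φ_k(z) ≤ z` for `z ≥ e^{-k}`, hence `φ_k(z) → z⁺`.
-/

open Filter MeasureTheory Set Real
open scoped Topology

lemma deriv_smoothTransition_eq_zero_of_notMem_Icc {t : ℝ} (ht : t ∉ Icc (0 : ℝ) 1) :
    deriv smoothTransition t = 0 := by
  rcases not_and_or.mp ht with h | h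
  · have : smoothTransition =ᶠ[𝓝 t] fun _ => 0 := by
      filter_upwards [Iio_mem_nhds (not_le.mp h)] with s hs
      exact smoothTransition.zero_of_nonpos (le_of_lt hs)
    simp [this.deriv_eq]
  · have : smoothTransition =ᶠ[𝓝 t] fun _ => 1 := by
      filter_upwards [Ioi_mem_nhds (not_le.mp h)] with s hs
      exact smoothTransition.one_of_one_le (le_of_lt hs)
    simp [this.deriv_eq]

lemma exists_pos_deriv_smoothTransition_le : ∃ M > 0, ∀ t, deriv smoothTransition t ≤ M := by
  obtain ⟨M, hM⟩ := (smoothTransition.contDiff (n := 1)).continuous_deriv le_rfl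
    |>.bddAbove_range_of_hasCompactSupport
      (HasCompactSupport.intro isCompact_Icc fun _ => deriv_smoothTransition_eq_zero_of_notMem_Icc)
  exact ⟨max M 1, by positivity, fun t => (hM (mem_range_self t)).trans (le_max_left _ _)⟩

noncomputable def logRamp (M : ℝ) (k : ℕ) (u : ℝ) : ℝ := 2 / (M * k) * (log u + (M / 2 + 1) * k)

noncomputable def heavisideApprox (M : ℝ) (k : ℕ) (u : ℝ) : ℝ :=
  if u ≤ 0 then 0 else smoothTransition (logRamp M k u)

noncomputable def posPartApprox (M : ℝ) (k : ℕ) (z : ℝ) : ℝ :=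
  ∫ u in (0 : ℝ)..z, heavisideApprox M k u

section

variable {M : ℝ} {k : ℕ} {u z : ℝ}

lemma heavisideApprox_eq_zero_of_lt (hM : 0 ≤ M) (hu : u < exp (-((M / 2 + 1) * k))) :
    heavisideApprox M k u = 0 := by
  unfold heavisideApprox
  split_ifs with h0
  · rfl
  refine smoothTransition.zero_of_nonpos (mul_nonpos_of_nonneg_of_nonpos (by positivity) ?_)
  linarith [(log_lt_iff_lt_exp (not_le.mp h0)).mpr hu]

lemma heavisideApprox_eq_one_of_le (hM : 0 < M) (hk : k ≠ 0) (hu : exp (-k) ≤ u) :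
    heavisideApprox M k u = 1 := by
  have hu0 : 0 < u := (exp_pos _).trans_le hu
  rw [heavisideApprox, if_neg (not_le.mpr hu0)]
  refine smoothTransition.one_of_one_le ?_
  have hk' : (0 : ℝ) < k := by positivity
  have hlog : -(k : ℝ) ≤ log u := (le_log_iff_exp_le hu0).mpr hu
  rw [logRamp, div_mul_eq_mul_div, le_div_iff₀ (by positivity)]
  nlinarith

lemma heavisideApprox_nonneg : 0 ≤ heavisideApprox M k u := by
  unfold heavisideApprox; split_ifs
  exacts [le_rfl, smoothTransition.nonneg _]

lemma heavisideApprox_le_one : heavisideApprox M k u ≤ 1 := by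
  unfold heavisideApprox; split_ifs
  exacts [zero_le_one, smoothTransition.le_one _]

lemma heavisideApprox_eventuallyEq (hu : 0 < u) :
    heavisideApprox M k =ᶠ[𝓝 u] smoothTransition ∘ logRamp M k := by
  filter_upwards [Ioi_mem_nhds hu] with v hv
  simp [heavisideApprox, not_le.mpr (mem_Ioi.mp hv)]

lemma hasDerivAt_logRamp (hu : 0 < u) : HasDerivAt (logRamp M k) (2 / (M * k) * u⁻¹) u :=
  ((hasDerivAt_log hu.ne').add_const _).const_mul _

lemma hasDerivAt_heavisideApprox (hu : 0 < u) :
    HasDerivAt (heavisideApprox M k)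
      (deriv smoothTransition (logRamp M k u) * (2 / (M * k) * u⁻¹)) u :=
  (smoothTransition.contDiff.differentiable one_ne_zero _).hasDerivAt.comp u
    (hasDerivAt_logRamp hu) |>.congr_of_eventuallyEq (heavisideApprox_eventuallyEq hu)

lemma contDiff_heavisideApprox (hM : 0 ≤ M) : ContDiff ℝ 1 (heavisideApprox M k) := by
  refine contDiff_iff_contDiffAt.mpr fun u => ?_
  rcases lt_or_ge u (exp (-((M / 2 + 1) * k))) with hu | hu
  · refine (contDiffAt_const (c := (0 : ℝ))).congr_of_eventuallyEq ?_
    filter_upwards [Iio_mem_nhds hu] with v hv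
    exact heavisideApprox_eq_zero_of_lt hM hv
  · have hu0 : 0 < u := (exp_pos _).trans_le hu
    refine (smoothTransition.contDiffAt.comp u ?_).congr_of_eventuallyEq
      (heavisideApprox_eventuallyEq hu0)
    exact contDiffAt_const.mul ((contDiffAt_log.mpr hu0.ne').add contDiffAt_const)

lemma deriv_heavisideApprox_le (hM : 0 < M) (hM' : ∀ t, deriv smoothTransition t ≤ M)
    (hk : k ≠ 0) (hu : 0 < u) : deriv (heavisideApprox M k) u ≤ 2 / (k * u) := by
  rw [(hasDerivAt_heavisideApprox hu).deriv]
  calc deriv smoothTransition (logRamp M k u) * (2 / (M * k) * u⁻¹)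
      ≤ M * (2 / (M * k) * u⁻¹) := by gcongr; exact hM' _
    _ = 2 / (k * u) := by field_simp


lemma continuous_heavisideApprox (hM : 0 ≤ M) : Continuous (heavisideApprox M k) :=
  (contDiff_heavisideApprox hM).continuous

lemma deriv_posPartApprox (hM : 0 ≤ M) : deriv (posPartApprox M k) = heavisideApprox M k :=
  funext ((continuous_heavisideApprox hM).deriv_integral _ 0)

lemma contDiff_posPartApprox (hM : 0 ≤ M) : ContDiff ℝ 2 (posPartApprox M k) := by
  rw [show (2 : WithTop ℕ∞) = 1 + 1 by norm_num, contDiff_succ_iff_deriv,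
    deriv_posPartApprox hM]
  exact ⟨fun z => ((continuous_heavisideApprox hM).integral_hasStrictDerivAt 0 z)
    |>.hasDerivAt.differentiableAt, by simp, contDiff_heavisideApprox hM⟩

lemma posPartApprox_eq_zero_of_nonpos (hz : z ≤ 0) : posPartApprox M k z = 0 := by
  rw [posPartApprox, intervalIntegral.integral_congr (g := fun _ => 0) fun u hu => ?_]
  · simp
  · rw [uIcc_of_ge hz] at hu
    exact if_pos hu.2

lemma posPartApprox_le_self (hM : 0 ≤ M) (hz : 0 ≤ z) : posPartApprox M k z ≤ z := by
  simpa [posPartApprox] using intervalIntegral.integral_mono_on (g := fun _ => 1) (μ := volume) hz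
    ((continuous_heavisideApprox hM).intervalIntegrable _ _) intervalIntegrable_const
    fun _ _ => heavisideApprox_le_one

lemma sub_exp_neg_le_posPartApprox (hM : 0 < M) (hk : k ≠ 0) (hz : exp (-k) ≤ z) :
    z - exp (-k) ≤ posPartApprox M k z := by
  have hg := (continuous_heavisideApprox (k := k) hM.le).intervalIntegrable (μ := volume)
  have head : 0 ≤ ∫ u in (0 : ℝ)..exp (-k), heavisideApprox M k u :=
    intervalIntegral.integral_nonneg (exp_pos _).le fun _ _ => heavisideApprox_nonneg
  have tail : ∫ u in exp (-k)..z, heavisideApprox M k u = z - exp (-k) := by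
    rw [intervalIntegral.integral_congr (g := fun _ => 1) fun u hu => ?_]
    · simp
    · rw [uIcc_of_le hz] at hu
      exact heavisideApprox_eq_one_of_le hM hk hu.1
  rw [posPartApprox, ← intervalIntegral.integral_add_adjacent_intervals (hg 0 _) (hg _ z), tail]
  linarith

lemma tendsto_posPartApprox (hM : 0 < M) (z : ℝ) :
    Tendsto (fun k => posPartApprox M k z) atTop (𝓝 (max z 0)) := by
  rcases le_or_gt z 0 with hz | hz
  · simp_rw [posPartApprox_eq_zero_of_nonpos hz, max_eq_right hz]
    exact tendsto_const_nhds
  have hexp : Tendsto (fun k : ℕ => exp (-k)) atTop (𝓝 0) :=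
    tendsto_exp_neg_atTop_nhds_zero.comp tendsto_natCast_atTop_atTop
  rw [max_eq_left hz.le]
  refine tendsto_of_tendsto_of_tendsto_of_le_of_le' (by simpa using tendsto_const_nhds.sub hexp)
    tendsto_const_nhds ?_ (Eventually.of_forall fun k => posPartApprox_le_self hM.le hz.le)
  filter_upwards [hexp.eventually_lt_const hz, eventually_ne_atTop 0] with k hk hk0
  exact sub_exp_neg_le_posPartApprox hM hk0 hk.le

end

/-- There is a sequence of `C²` functions `φ_k` approximating the positive part:
`φ_k = φ_k' = 0` on `(-∞,0]`, `φ_k(z) → z⁺` pointwise, `0 ≤ φ_k' ≤ 1`, and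
`φ_k''(z) ≤ 2/(kz)` for `z > 0` (for `k ≥ 1`). -/
theorem exists_smooth_positive_part_approximation :
    ∃ φ : ℕ → ℝ → ℝ,
      (∀ k, ContDiff ℝ 2 (φ k)) ∧
      (∀ k, ∀ z ≤ (0:ℝ), φ k z = 0 ∧ deriv (φ k) z = 0) ∧
      (∀ k (z : ℝ), 0 ≤ deriv (φ k) z ∧ deriv (φ k) z ≤ 1) ∧
      (∀ k, 1 ≤ k → ∀ z > (0:ℝ), deriv (deriv (φ k)) z ≤ 2 / ((k : ℝ) * z)) ∧
      (∀ z : ℝ, Tendsto (fun k => φ k z) atTop (nhds (max z 0))) := by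
  obtain ⟨M, hM, hderiv⟩ := exists_pos_deriv_smoothTransition_le
  refine ⟨posPartApprox M, fun k => contDiff_posPartApprox hM.le, fun k z hz => ?_,
    fun k z => ?_, fun k hk z hz => ?_, tendsto_posPartApprox hM⟩
  all_goals rw [deriv_posPartApprox hM.le]
  · exact ⟨posPartApprox_eq_zero_of_nonpos hz, if_pos hz⟩
  · exact ⟨heavisideApprox_nonneg, heavisideApprox_le_one⟩
  · exact deriv_heavisideApprox_le hM hderiv (by omega) hz
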